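/- Let V be a 𝔤-module, 𝔤 = 𝔰𝔳(0), which is a free U(𝔥)-module of rank 1 with generator w. For each m ∈ ℤ let a_m ∈ ℂ[x,y,z] be the unique polynomial with ρ(M_m)·w = a_m(ρ(L₀),ρ(M₀),ρ(Y₀))·w. Then a_m does not involve the variable x, i.e., a_m lies in the subring ℂ[y,z] of ℂ[x,y,z]. -/

import Mathlib

/-!
Since `[L₀, M_n] = n M_n` while `M_n` commutes with `M₀` and `Y₀`, the operator `M_n` acts on
`V = ℂ[L₀, M₀, Y₀]·w` by `p·w ↦ p(x - n, y, z) a_n·w`. Hence `[M_m, M_n] = 0` gives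
`a_m(x - n, y, z) a_n = a_n(x - m, y, z) a_m`, and comparing the two highest coefficients in `x`
yields `deg_x(a_m)·n = deg_x(a_n)·m` whenever `a_m, a_n ≠ 0`. If `deg_x a_m > 0`, pick
`n = ±1` with `n m ≤ 0`: this forces `a_n = 0`, so `M_n` acts by zero on `V`, hence so does
`[L_{m-n}, M_n] = n M_m`, and `a_m = 0`, a contradiction.
-/

/-- Evaluation of a polynomial `u(x,y,z)` at three operators `A, B, C`, applied to a
vector `w`: `u(A,B,C)·w` (when `A,B,C` pairwise commute, this is the usual substitution). -/
noncomputable def evalP {V : Type*} [AddCommGroup V] [Module ℂ V]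
    (A B C : Module.End ℂ V) (w : V) (u : MvPolynomial (Fin 3) ℂ) : V :=
  (AddMonoidAlgebra.coeff u).sum fun d c => c • ((A ^ d 0 * B ^ d 1 * C ^ d 2) w)

namespace Polynomial

theorem nextCoeff_mul_of_domain {R : Type*} [Semiring R] [NoZeroDivisors R] (f g : R[X]) :
    (f * g).nextCoeff = f.leadingCoeff * g.nextCoeff + f.nextCoeff * g.leadingCoeff := by
  rw [← coeff_one_reverse, reverse_mul_of_domain, coeff_mul, Finset.Nat.antidiagonal_succ]
  simp

theorem nextCoeff_taylor {R : Type*} [CommSemiring R] (f : R[X]) (r : R) :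
    (taylor r f).nextCoeff = f.nextCoeff + f.natDegree * r * f.leadingCoeff := by
  obtain h | h := Nat.eq_zero_or_pos f.natDegree
  · simp [nextCoeff, natDegree_taylor, h]
  have hle : (hasseDeriv (f.natDegree - 1) f).natDegree ≤ 1 := by
    have := natDegree_hasseDeriv_le f (f.natDegree - 1)
    omega
  rw [nextCoeff_of_natDegree_pos (by rwa [natDegree_taylor]), natDegree_taylor,
    nextCoeff_of_natDegree_pos h, taylor_coeff, eq_X_add_C_of_natDegree_le_one hle]
  simp only [hasseDeriv_coeff, eval_add, eval_mul, eval_C, eval_X, leadingCoeff]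
  rw [Nat.add_sub_cancel' h, zero_add, Nat.choose_self, Nat.choose_symm h, Nat.choose_one_right]
  ring

theorem natDegree_mul_eq_of_taylor_mul_eq {R : Type*} [CommRing R] [NoZeroDivisors R]
    {P Q : R[X]} (hP : P ≠ 0) (hQ : Q ≠ 0) {r s : R} (h : taylor r P * Q = taylor s Q * P) :
    P.natDegree * r = Q.natDegree * s := by
  have h' := congrArg nextCoeff h
  simp only [nextCoeff_mul_of_domain, nextCoeff_taylor, leadingCoeff_taylor] at h'
  have key : (P.natDegree * r - Q.natDegree * s) * (P.leadingCoeff * Q.leadingCoeff) = 0 := by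
    linear_combination h'
  simpa [sub_eq_zero, hP, hQ] using key

end Polynomial

namespace MvPolynomial

variable {R : Type*} [CommRing R] {k : ℕ}

noncomputable def shiftFirstVar (c : R) :
    MvPolynomial (Fin (k + 1)) R →ₐ[R] MvPolynomial (Fin (k + 1)) R :=
  aeval (Fin.cons (X 0 + C c) fun i => X i.succ)

theorem shiftFirstVar_X_zero (c : R) :
    shiftFirstVar c (X 0 : MvPolynomial (Fin (k + 1)) R) = X 0 + C c := by
  simp [shiftFirstVar]

theorem shiftFirstVar_X_succ (c : R) (j : Fin k) :
    shiftFirstVar c (X j.succ : MvPolynomial (Fin (k + 1)) R) = X j.succ := by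
  simp [shiftFirstVar]

theorem finSuccEquiv_shiftFirstVar (c : R) (p : MvPolynomial (Fin (k + 1)) R) :
    finSuccEquiv R k (shiftFirstVar c p) = Polynomial.taylor (C c) (finSuccEquiv R k p) := by
  suffices (finSuccEquiv R k).toAlgHom.comp (shiftFirstVar c) =
      ((Polynomial.taylorAlgHom (C c : MvPolynomial (Fin k) R)).restrictScalars R).comp
        (finSuccEquiv R k).toAlgHom from
    congrArg (· p) this
  refine algHom_ext fun i => Fin.cases ?_ (fun j => ?_) i <;>
    simp [shiftFirstVar, finSuccEquiv_apply, Polynomial.taylor_X, Polynomial.taylor_C]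

theorem degreeOf_zero_mul_eq_of_shiftFirstVar_mul_eq [NoZeroDivisors R]
    {p q : MvPolynomial (Fin (k + 1)) R} (hp : p ≠ 0) (hq : q ≠ 0) {r s : R}
    (h : shiftFirstVar r p * q = shiftFirstVar s q * p) :
    (degreeOf 0 p : R) * r = degreeOf 0 q * s := by
  have h' := congrArg (finSuccEquiv R k) h
  simp only [map_mul, finSuccEquiv_shiftFirstVar] at h'
  have key := Polynomial.natDegree_mul_eq_of_taylor_mul_eq
    ((map_ne_zero_iff _ (finSuccEquiv R k).injective).mpr hp)
    ((map_ne_zero_iff _ (finSuccEquiv R k).injective).mpr hq) h'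
  rw [natDegree_finSuccEquiv, natDegree_finSuccEquiv] at key
  apply C_injective (Fin k) R
  simpa only [map_mul, map_natCast] using key

end MvPolynomial

namespace LieModule

variable {R L M : Type*} [CommRing R] [LieRing L] [LieAlgebra R L] [AddCommGroup M] [Module R M]
  [LieRingModule L M] [LieModule R L M]

theorem toEnd_mul_toEnd (x y : L) :
    toEnd R L M x * toEnd R L M y = toEnd R L M y * toEnd R L M x + toEnd R L M ⁅x, y⁆ := by
  ext
  simp

variable (R M) in
theorem commute_toEnd_of_lie_eq_zero {x y : L} (h : ⁅x, y⁆ = 0) :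
    Commute (toEnd R L M x) (toEnd R L M y) := by
  simpa [Commute, SemiconjBy, h] using toEnd_mul_toEnd (R := R) (M := M) x y

end LieModule

theorem natCast_mul_ne_natCast_mul_of_mul_nonpos {d e : ℕ} {n m : ℤ} (hd : d ≠ 0) (hn : n ≠ 0)
    (hnm : n * m ≤ 0) : (d : ℤ) * n ≠ e * m := by
  intro h
  have hpos : 0 < (d : ℤ) * (n * n) := mul_pos (by omega) (mul_self_pos.2 hn)
  have hnonpos : (d : ℤ) * (n * n) ≤ 0 :=
    calc _ = (e : ℤ) * (n * m) := by linear_combination n * h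
      _ ≤ 0 := mul_nonpos_of_nonneg_of_nonpos (by positivity) hnm
  exact hpos.not_ge hnonpos

open MvPolynomial

section EvalP

variable {V : Type*} [AddCommGroup V] [Module ℂ V] {A B C : Module.End ℂ V} (w : V)

variable (A B C) in
noncomputable def evalPLinear : MvPolynomial (Fin 3) ℂ →ₗ[ℂ] V :=
  Finsupp.linearCombination ℂ (fun d : Fin 3 →₀ ℕ => (A ^ d 0 * B ^ d 1 * C ^ d 2) w) ∘ₗ
    (AddMonoidAlgebra.coeffLinearEquiv ℂ).toLinearMap

theorem evalPLinear_apply (p : MvPolynomial (Fin 3) ℂ) :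
    evalPLinear A B C w p = evalP A B C w p :=
  rfl

theorem evalP_zero : evalP A B C w 0 = 0 :=
  map_zero (evalPLinear A B C w)

theorem evalP_add (p q : MvPolynomial (Fin 3) ℂ) :
    evalP A B C w (p + q) = evalP A B C w p + evalP A B C w q :=
  map_add (evalPLinear A B C w) p q

theorem evalP_smul (c : ℂ) (p : MvPolynomial (Fin 3) ℂ) :
    evalP A B C w (c • p) = c • evalP A B C w p :=
  map_smul (evalPLinear A B C w) c p

theorem evalP_monomial (d : Fin 3 →₀ ℕ) (c : ℂ) :
    evalP A B C w (monomial d c) = c • (A ^ d 0 * B ^ d 1 * C ^ d 2) w := by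
  rw [← evalPLinear_apply, evalPLinear, LinearMap.comp_apply, LinearEquiv.coe_coe,
    AddMonoidAlgebra.coeffLinearEquiv_apply, ← single_eq_monomial, AddMonoidAlgebra.coeff_single,
    Finsupp.linearCombination_single]

theorem evalP_C (c : ℂ) : evalP A B C w (MvPolynomial.C c) = c • w := by
  simpa using evalP_monomial w 0 c

theorem evalP_X_mul (hAB : Commute A B) (hAC : Commute A C) (hBC : Commute B C)
    (i : Fin 3) (p : MvPolynomial (Fin 3) ℂ) :
    evalP A B C w (X i * p) = ![A, B, C] i (evalP A B C w p) := by
  induction p using MvPolynomial.induction_on' with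
  | monomial d c =>
    rw [X, monomial_mul, one_mul, evalP_monomial, evalP_monomial, map_smul,
      ← Module.End.mul_apply]
    congr 2
    fin_cases i <;> simp [add_comm 1, pow_succ', mul_assoc]
    · rw [(hAB.symm.pow_right (d 0)).left_comm]
    · rw [← (hBC.symm.pow_right (d 1)).left_comm, ← (hAC.symm.pow_right (d 0)).left_comm]
  | add p q hp hq => rw [mul_add, evalP_add, evalP_add, hp, hq, map_add]

variable (A B C) in
/-- `N p(A, B, C) = p(A + c, B, C) N`, expressed on the generators. -/
def IsShiftOperator (c : ℂ) (N : Module.End ℂ V) : Prop :=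
  N * A = A * N + c • N ∧ Commute N B ∧ Commute N C

theorem IsShiftOperator.apply_evalP (hAB : Commute A B) (hAC : Commute A C) (hBC : Commute B C)
    {c : ℂ} {N : Module.End ℂ V} (hN : IsShiftOperator A B C c N) {a : MvPolynomial (Fin 3) ℂ}
    (hNw : N w = evalP A B C w a) (p : MvPolynomial (Fin 3) ℂ) :
    N (evalP A B C w p) = evalP A B C w (shiftFirstVar c p * a) := by
  obtain ⟨hNA, hNB, hNC⟩ := hN
  induction p using MvPolynomial.induction_on with
  | C r => rw [evalP_C, map_smul, hNw, ← evalP_smul, smul_eq_C_mul, ← algebraMap_eq,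
      AlgHom.commutes]
  | add p q hp hq => rw [evalP_add, map_add, hp, hq, map_add, add_mul, evalP_add]
  | mul_X p i hp =>
    rw [mul_comm, evalP_X_mul w hAB hAC hBC, map_mul, mul_assoc]
    obtain rfl | rfl | rfl : i = 0 ∨ i = 1 ∨ i = 2 := by fin_cases i <;> simp
    all_goals simp only [Matrix.cons_val]
    · rw [← Module.End.mul_apply, hNA, LinearMap.add_apply, Module.End.mul_apply,
        LinearMap.smul_apply, hp, shiftFirstVar_X_zero, add_mul, evalP_add,
        evalP_X_mul w hAB hAC hBC, ← smul_eq_C_mul, evalP_smul]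
      rfl
    · rw [← Module.End.mul_apply, hNB.eq, Module.End.mul_apply, hp,
        show (1 : Fin 3) = Fin.succ 0 from rfl, shiftFirstVar_X_succ, evalP_X_mul w hAB hAC hBC]
      rfl
    · rw [← Module.End.mul_apply, hNC.eq, Module.End.mul_apply, hp,
        show (2 : Fin 3) = Fin.succ 1 from rfl, shiftFirstVar_X_succ, evalP_X_mul w hAB hAC hBC]
      rfl

theorem IsShiftOperator.degreeOf_mul_eq_of_commute (hinj : Function.Injective (evalP A B C w))
    (hAB : Commute A B) (hAC : Commute A C) (hBC : Commute B C) {c₁ c₂ : ℂ}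
    {N₁ N₂ : Module.End ℂ V} (h₁ : IsShiftOperator A B C c₁ N₁) (h₂ : IsShiftOperator A B C c₂ N₂)
    (hN : Commute N₁ N₂) {a₁ a₂ : MvPolynomial (Fin 3) ℂ} (ha₁ : a₁ ≠ 0) (ha₂ : a₂ ≠ 0)
    (h₁w : N₁ w = evalP A B C w a₁) (h₂w : N₂ w = evalP A B C w a₂) :
    (degreeOf 0 a₁ : ℂ) * c₂ = degreeOf 0 a₂ * c₁ := by
  refine degreeOf_zero_mul_eq_of_shiftFirstVar_mul_eq ha₁ ha₂ (hinj ?_)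
  rw [← h₂.apply_evalP w hAB hAC hBC h₂w, ← h₁.apply_evalP w hAB hAC hBC h₁w, ← h₁w, ← h₂w,
    ← Module.End.mul_apply, ← Module.End.mul_apply, hN.eq]

end EvalP

theorem stmt14_general
    -- `𝔤 = 𝔰𝔳(0)`: a complex Lie algebra with basis `{L n, M n, Y n : n ∈ ℤ}` ...
    (g : Type*) [LieRing g] [LieAlgebra ℂ g] (L M Y : ℤ → g)
    -- ... and the following brackets:
    (hLY : ∀ n m : ℤ, ⁅L n, Y m⁆ = ((m : ℂ) - (n : ℂ) / 2) • Y (m + n))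
    (hLM : ∀ n m : ℤ, ⁅L n, M m⁆ = (m : ℂ) • M (m + n))
    (hYM : ∀ n m : ℤ, ⁅Y n, M m⁆ = 0)
    (hMM : ∀ n m : ℤ, ⁅M n, M m⁆ = 0)
    -- a `𝔤`-module `V`:
    (V : Type*) [AddCommGroup V] [Module ℂ V] [LieRingModule g V] [LieModule ℂ g V]
    (w : V)
    (hfree : Function.Bijective (evalP (LieModule.toEnd ℂ g V (L 0))
      (LieModule.toEnd ℂ g V (M 0)) (LieModule.toEnd ℂ g V (Y 0)) w)) :
    ∀ (m : ℤ) (a : MvPolynomial (Fin 3) ℂ),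
      evalP (LieModule.toEnd ℂ g V (L 0)) (LieModule.toEnd ℂ g V (M 0))
        (LieModule.toEnd ℂ g V (Y 0)) w a = ⁅M m, w⁆ →
      MvPolynomial.degreeOf 0 a = 0 := by
  intro m a ha
  set T := LieModule.toEnd ℂ g V
  have hE0 : evalP (T (L 0)) (T (M 0)) (T (Y 0)) w 0 = 0 := evalP_zero w
  have hAB := LieModule.commute_toEnd_of_lie_eq_zero ℂ V (by simp [hLM] : ⁅L 0, M 0⁆ = 0)
  have hAC := LieModule.commute_toEnd_of_lie_eq_zero ℂ V (by simp [hLY] : ⁅L 0, Y 0⁆ = 0)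
  have hBC := (LieModule.commute_toEnd_of_lie_eq_zero ℂ V (hYM 0 0)).symm
  have hMshift (n : ℤ) : IsShiftOperator (T (L 0)) (T (M 0)) (T (Y 0)) (-n) (T (M n)) :=
    ⟨by rw [LieModule.toEnd_mul_toEnd, ← lie_skew, hLM, add_zero, map_neg, map_smul, neg_smul],
      LieModule.commute_toEnd_of_lie_eq_zero ℂ V (hMM n 0),
      LieModule.commute_toEnd_of_lie_eq_zero ℂ V (by rw [← lie_skew, hYM, neg_zero])⟩
  by_contra hdeg
  have ha0 : a ≠ 0 := by
    rintro rfl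
    simp at hdeg
  obtain ⟨n, hn0, hnm⟩ : ∃ n : ℤ, n ≠ 0 ∧ n * m ≤ 0 :=
    ⟨if m ≤ 0 then 1 else -1, by split_ifs <;> omega⟩
  obtain ⟨b, hb⟩ := hfree.2 ⁅M n, w⁆
  have hb0 : b = 0 := by
    by_contra hb0
    have h := (hMshift m).degreeOf_mul_eq_of_commute w hfree.1 hAB hAC hBC (hMshift n)
      (LieModule.commute_toEnd_of_lie_eq_zero ℂ V (hMM m n)) ha0 hb0 ha.symm hb.symm
    refine natCast_mul_ne_natCast_mul_of_mul_nonpos (e := degreeOf 0 b) hdeg hn0 hnm ?_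
    exact_mod_cast (by linear_combination -h : (degreeOf 0 a : ℂ) * n = degreeOf 0 b * m)
  have hMn (v : V) : ⁅M n, v⁆ = 0 := by
    obtain ⟨p, rfl⟩ := hfree.2 v
    exact ((hMshift n).apply_evalP w hAB hAC hBC hb.symm p).trans (by rw [hb0, mul_zero, hE0])
  have hMm : ⁅M m, w⁆ = 0 := by
    have h := lie_lie (L (m - n)) (M n) w
    rw [hLM, add_sub_cancel, hMn, hMn, lie_zero, sub_zero, smul_lie] at h
    exact (smul_eq_zero.1 h).resolve_left (by exact_mod_cast hn0)
  exact ha0 (hfree.1 (by rw [ha, hMm, hE0]))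

/-- If the `𝔰𝔳(0)`-module `V` is a free `U(𝔥)`-module of rank 1 with generator `w`, and
`a_m ∈ ℂ[x,y,z]` is the (unique) polynomial with `ρ(M_m)·w = a_m(ρL₀,ρM₀,ρY₀)·w`, then
`a_m` does not involve the variable `x`, i.e. `a_m ∈ ℂ[y,z]`. -/
theorem stmt14
    -- `𝔤 = 𝔰𝔳(0)`: a complex Lie algebra with basis `{L n, M n, Y n : n ∈ ℤ}` ...
    (g : Type*) [LieRing g] [LieAlgebra ℂ g] (L M Y : ℤ → g)
    (B : Module.Basis (Fin 3 × ℤ) ℂ g)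
    (hB : ∀ n : ℤ, B (0, n) = L n ∧ B (1, n) = M n ∧ B (2, n) = Y n)
    -- ... and the following brackets:
    (hLL : ∀ n m : ℤ, ⁅L n, L m⁆ = (((m : ℂ) - (n : ℂ))) • L (m + n))
    (hLY : ∀ n m : ℤ, ⁅L n, Y m⁆ = ((m : ℂ) - (n : ℂ) / 2) • Y (m + n))
    (hLM : ∀ n m : ℤ, ⁅L n, M m⁆ = (m : ℂ) • M (m + n))
    (hYY : ∀ n m : ℤ, ⁅Y n, Y m⁆ = (((m : ℂ) - (n : ℂ))) • M (m + n))
    (hYM : ∀ n m : ℤ, ⁅Y n, M m⁆ = 0)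
    (hMM : ∀ n m : ℤ, ⁅M n, M m⁆ = 0)
    -- a `𝔤`-module `V`:
    (V : Type*) [AddCommGroup V] [Module ℂ V] [LieRingModule g V] [LieModule ℂ g V]
    (w : V)
    (hfree : Function.Bijective (evalP (LieModule.toEnd ℂ g V (L 0))
      (LieModule.toEnd ℂ g V (M 0)) (LieModule.toEnd ℂ g V (Y 0)) w)) :
    ∀ (m : ℤ) (a : MvPolynomial (Fin 3) ℂ),
      evalP (LieModule.toEnd ℂ g V (L 0)) (LieModule.toEnd ℂ g V (M 0))
        (LieModule.toEnd ℂ g V (Y 0)) w a = ⁅M m, w⁆ →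
      MvPolynomial.degreeOf 0 a = 0 :=
  stmt14_general g L M Y hLY hLM hYM hMM V w hfree
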